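/- arXiv:2512.05271 — 4 statements merged into one kernel-verified Lean document; each statement's English description precedes it below -/
import Mathlib

section
/- In the partial information model with agents 1,...,n, for any nonempty subset S ⊆ [n] of agents, the iterated conditional expectation E[ E[ ... E[Y | S_{i_1}] ... | S_{i_{k-1}}] | S_{i_k}] for any ordering (i_1,...,i_k) of S equals Σ_{T : S ⊆ T} X_T. In particular, it depends only on the set S and not the ordering. -/
/-!
Conditioning on agent `i`'s σ-algebra acts on `Y = ∑ T, X T` summand by summand: `X T` is kept
when `i ∈ T`, because it is then measurable for agent `i`, and is replaced by its mean `0` when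
`i ∉ T`, because `X T` is then independent of all of agent `i`'s signals. Each further query
therefore only discards the summands whose index misses the new agent, and after the queries
`i_1, …, i_k` exactly the `X T` with `{i_1, …, i_k} ⊆ T` remain.
-/

open MeasureTheory ProbabilityTheory

/-- The σ-algebra generated by agent `i`'s signals `{X T : i ∈ T}`. -/
def agentSigma {Ω : Type*} {n : ℕ} (X : Finset (Fin n) → Ω → ℝ) (i : Fin n) :
    MeasurableSpace Ω :=
  ⨆ T ∈ {T : Finset (Fin n) | i ∈ T}, MeasurableSpace.comap (X T) inferInstance

/-- Iterated expectation query.  `iterQ X [] = Y = ∑ T, X T`, and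
`iterQ X (i :: L) = E[iterQ X L ∣ S_i]`.  Thus `iterQ X [i_k, …, i_1]` is the
query `iter(i_1, …, i_k)` of the paper. -/
noncomputable def iterQ {Ω : Type*} [MeasureSpace Ω] {n : ℕ}
    (X : Finset (Fin n) → Ω → ℝ) : List (Fin n) → Ω → ℝ
  | [] => fun ω => ∑ T : Finset (Fin n), X T ω
  | (i :: L) => (ℙ : Measure Ω)[iterQ X L | agentSigma X i]

namespace ProbabilityTheory

variable {Ω ι : Type*} {mΩ : MeasurableSpace Ω} {μ : Measure Ω} [IsFiniteMeasure μ]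
  {X : ι → Ω → ℝ} {S : Set ι}

lemma iSup_comap_le_of_measurable (hmeas : ∀ j, Measurable (X j)) :
    ⨆ j ∈ S, MeasurableSpace.comap (X j) inferInstance ≤ mΩ :=
  iSup₂_le fun j _ => (hmeas j).comap_le

lemma condExp_iSup_comap_of_mem (hmeas : ∀ j, Measurable (X j)) {j : ι}
    (hint : Integrable (X j) μ) (hj : j ∈ S) :
    μ[X j | ⨆ k ∈ S, MeasurableSpace.comap (X k) inferInstance] = X j := by
  have hle : MeasurableSpace.comap (X j) inferInstance
      ≤ ⨆ k ∈ S, MeasurableSpace.comap (X k) inferInstance :=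
    le_iSup₂ (f := fun k _ => MeasurableSpace.comap (X k) inferInstance) j hj
  exact condExp_of_stronglyMeasurable (iSup_comap_le_of_measurable hmeas)
    (measurable_iff_comap_le.mpr hle).stronglyMeasurable hint

lemma condExp_iSup_comap_of_notMem (hindep : iIndepFun X μ) (hmeas : ∀ j, Measurable (X j))
    {j : ι} (hj : j ∉ S) :
    μ[X j | ⨆ k ∈ S, MeasurableSpace.comap (X k) inferInstance] =ᵐ[μ] fun _ => μ[X j] := by
  have hindep_sigma : Indep (MeasurableSpace.comap (X j) inferInstance)
      (⨆ k ∈ S, MeasurableSpace.comap (X k) inferInstance) μ := by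
    simpa using indep_iSup_of_disjoint (fun k => (hmeas k).comap_le)
      ((iIndepFun_iff_iIndep _ _ _).mp hindep) (S := {j}) (T := S)
      (Set.disjoint_singleton_left.mpr hj)
  exact condExp_indep_eq (hmeas j).comap_le (iSup_comap_le_of_measurable hmeas)
    (measurable_iff_comap_le.mpr le_rfl).stronglyMeasurable hindep_sigma

lemma condExp_iSup_comap_ae_eq_ite (hindep : iIndepFun X μ) (hmeas : ∀ j, Measurable (X j))
    (hint : ∀ j, Integrable (X j) μ) (hmean : ∀ j, μ[X j] = 0) [DecidablePred (· ∈ S)] (j : ι) :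
    μ[X j | ⨆ k ∈ S, MeasurableSpace.comap (X k) inferInstance]
      =ᵐ[μ] fun ω => if j ∈ S then X j ω else 0 := by
  by_cases hj : j ∈ S
  · simp only [hj, if_true]
    exact (condExp_iSup_comap_of_mem hmeas (hint j) hj).eventuallyEq
  · simpa only [hj, if_false, hmean j] using condExp_iSup_comap_of_notMem hindep hmeas hj

lemma condExp_sum_iSup_comap_ae_eq_sum_filter (hindep : iIndepFun X μ)
    (hmeas : ∀ j, Measurable (X j)) (hint : ∀ j, Integrable (X j) μ) (hmean : ∀ j, μ[X j] = 0)
    [DecidablePred (· ∈ S)] (A : Finset ι) :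
    μ[fun ω => ∑ j ∈ A, X j ω | ⨆ k ∈ S, MeasurableSpace.comap (X k) inferInstance]
      =ᵐ[μ] fun ω => ∑ j ∈ A with j ∈ S, X j ω := by
  have hsum : (fun ω => ∑ j ∈ A, X j ω) = ∑ j ∈ A, X j := by ext; simp
  have hterms := (Filter.eventually_all_finset A).mpr
    fun j _ => condExp_iSup_comap_ae_eq_ite (S := S) hindep hmeas hint hmean j
  filter_upwards [hsum ▸ condExp_finsetSum (fun j _ => hint j) _, hterms] with ω hω hterms
  rw [hω, Finset.sum_apply, Finset.sum_congr rfl hterms, Finset.sum_filter]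

end ProbabilityTheory

theorem stmt1_general {Ω : Type*} [MeasureSpace Ω] [IsProbabilityMeasure (ℙ : Measure Ω)]
    (n : ℕ) (X : Finset (Fin n) → Ω → ℝ)
    (hindep : iIndepFun X ℙ)
    (hmeas : ∀ T, Measurable (X T))
    (hL2 : ∀ T, MemLp (X T) 2 ℙ)
    (hmean : ∀ T, ∫ ω, X T ω ∂ℙ = 0)
    (L : List (Fin n)) :
    iterQ X L
      =ᵐ[ℙ] fun ω => ∑ T ∈ Finset.univ.filter
        (fun T : Finset (Fin n) => L.toFinset ⊆ T), X T ω := by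
  induction L with
  | nil => simp [iterQ]
  | cons i L ih =>
    calc iterQ X (i :: L)
        =ᵐ[ℙ] ℙ[fun ω => ∑ T ∈ Finset.univ.filter (L.toFinset ⊆ ·), X T ω
            | agentSigma X i] :=
          condExp_congr_ae ih
      _ =ᵐ[ℙ] fun ω => ∑ T ∈ Finset.univ.filter (L.toFinset ⊆ ·) with i ∈ T, X T ω :=
          condExp_sum_iSup_comap_ae_eq_sum_filter hindep hmeas
            (fun T => (hL2 T).integrable one_le_two) hmean _
      _ = _ := by
          ext ω
          rw [Finset.filter_filter]
          simp only [List.toFinset_cons, Finset.insert_subset_iff, and_comm]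

/-- In the partial information model, for any nonempty list of agents `L`,
the iterated expectation query equals `∑_{T : L.toFinset ⊆ T} X T` a.s.; in
particular it depends only on the set of agents appearing in `L`, not on the
ordering. -/
theorem stmt1 {Ω : Type*} [MeasureSpace Ω] [IsProbabilityMeasure (ℙ : Measure Ω)]
    (n : ℕ) (X : Finset (Fin n) → Ω → ℝ)
    (hindep : iIndepFun X ℙ)
    (hmeas : ∀ T, Measurable (X T))
    (hL2 : ∀ T, MemLp (X T) 2 ℙ)
    (hmean : ∀ T, ∫ ω, X T ω ∂ℙ = 0)
    (hempty : X ∅ = 0)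
    (L : List (Fin n)) (hL : L ≠ []) :
    iterQ X L
      =ᵐ[ℙ] fun ω => ∑ T ∈ Finset.univ.filter
        (fun T : Finset (Fin n) => L.toFinset ⊆ T), X T ω :=
  stmt1_general n X hindep hmeas hL2 hmean L
end

section
/- The minimizer of max_{x∈[1,n]} |p(x)| over polynomials p of degree at most d with p(0) = 1 is unique. -/
/-!
If `p` and `q` are both minimizers with sup norm `M`, so is their average `f`, and at every point
where `|f| = M` the values of `p` and `q` must coincide. So `p - q`, of degree `≤ d`, vanishes on
the extremal set of `f`; it suffices to show that this set has more than `d` points. If it had at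
most `d`, Lagrange interpolation would give `h` of degree `≤ d` with `h(0) = 0` and `h = f` on
the extremal set, and `f - ε h` would, for suitable `ε`, still be admissible with smaller sup norm.
-/

open Polynomial Filter Topology

theorem exists_abs_lt_of_abs_eq_imp_eq_zero {X : Type*} [TopologicalSpace X] {K : Set X}
    (hK : IsCompact K) {f g : X → ℝ} (hf : Continuous f) (hg : Continuous g) {M : ℝ}
    (hM : 0 < M) (hfM : ∀ x ∈ K, |f x| ≤ M) (hg0 : ∀ x ∈ K, |f x| = M → g x = 0) :
    ∃ ε : ℝ, ∀ x ∈ K, |(1 - ε) * f x + ε * g x| < M := by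
  -- Where `|g| < M / 2` any `ε ∈ (0, 1]` helps; on the compact rest `|f|` stays below some `M₁ < M`.
  set B := K ∩ {x | M / 2 ≤ |g x|}
  have hfB : ∀ x ∈ B, |f x| < M := fun x hx ↦ (hfM x hx.1).lt_of_ne fun hx' ↦ by
    have := hx.2
    rw [Set.mem_ofPred_eq, hg0 x hx.1 hx', abs_zero] at this
    linarith
  obtain ⟨M₁, hM₁0, hM₁M, hM₁⟩ : ∃ M₁, 0 ≤ M₁ ∧ M₁ < M ∧ ∀ x ∈ B, |f x| ≤ M₁ := by
    rcases B.eq_empty_or_nonempty with hB | hB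
    · exact ⟨0, le_rfl, hM, by simp [hB]⟩
    obtain ⟨x₀, hx₀, hmax⟩ := (hK.inter_right (isClosed_le continuous_const hg.abs)).exists_isMaxOn
      hB hf.abs.continuousOn
    exact ⟨|f x₀|, abs_nonneg _, hfB x₀ hx₀, fun x hx ↦ hmax hx⟩
  obtain ⟨C, hC⟩ := hK.exists_bound_of_continuousOn hg.continuousOn
  have hlim : Tendsto (fun ε : ℝ ↦ M₁ + ε * C) (𝓝 0) (𝓝 M₁) := by
    simpa using (tendsto_const_nhds (x := M₁)).add ((tendsto_id (x := 𝓝 (0 : ℝ))).mul_const C)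
  obtain ⟨ε, ⟨hε0, hε1⟩, hεC⟩ := (Filter.Eventually.and (Ioc_mem_nhdsGT one_pos)
    (nhdsWithin_le_nhds (hlim.eventually (gt_mem_nhds hM₁M)))).exists
  refine ⟨ε, fun x hx ↦ ?_⟩
  have hconv : |(1 - ε) * f x + ε * g x| ≤ (1 - ε) * |f x| + ε * |g x| := by
    grw [abs_add_le, abs_mul, abs_mul, abs_of_nonneg (sub_nonneg.2 hε1), abs_of_pos hε0]
  by_cases hxB : M / 2 ≤ |g x|
  · calc |(1 - ε) * f x + ε * g x| ≤ (1 - ε) * M₁ + ε * C := by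
          grw [hconv, hM₁ x ⟨hx, hxB⟩, ← Real.norm_eq_abs, hC x hx]
      _ ≤ M₁ + ε * C := by nlinarith
      _ < M := hεC
  · calc |(1 - ε) * f x + ε * g x| ≤ (1 - ε) * M + ε * |g x| := by
          grw [hconv, hfM x hx]
      _ < (1 - ε) * M + ε * M := by gcongr; linarith
      _ = M := by ring

theorem Polynomial.exists_natDegree_le_card_eval_zero_eq_zero {F : Type*} [Field F]
    (s : Finset F) (hs : 0 ∉ s) (v : F → F) :
    ∃ h : F[X], h.natDegree ≤ s.card ∧ h.eval 0 = 0 ∧ ∀ x ∈ s, h.eval x = v x := by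
  classical
  have hinj : Set.InjOn id ((insert 0 s : Finset F) : Set F) := Function.injective_id.injOn
  refine ⟨Lagrange.interpolate (insert 0 s) id (Function.update v 0 0), ?_, ?_, fun x hx ↦ ?_⟩
  · have := Lagrange.degree_interpolate_lt (Function.update v 0 0) hinj
    rw [Finset.card_insert_of_notMem hs] at this
    exact natDegree_le_iff_degree_le.2 (Order.le_of_lt_succ this)
  · simpa using Lagrange.eval_interpolate_at_node (Function.update v 0 0) hinj
      (Finset.mem_insert_self 0 s)
  · simpa [ne_of_mem_of_not_mem hx hs] using Lagrange.eval_interpolate_at_node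
      (Function.update v 0 0) hinj (Finset.mem_insert_of_mem hx)

theorem eq_of_abs_le_of_abs_add_div_two_eq {a b M : ℝ} (ha : |a| ≤ M) (hb : |b| ≤ M)
    (hab : |(a + b) / 2| = M) : a = b := by
  rw [abs_div, abs_two] at hab
  rcases abs_le.1 ha with ⟨_, _⟩
  rcases abs_le.1 hb with ⟨_, _⟩
  rcases abs_cases (a + b) with ⟨_, _⟩ | ⟨_, _⟩ <;> linarith

namespace Polynomial

noncomputable def supNormOn (K : Set ℝ) (r : ℝ[X]) : ℝ :=
  sSup ((fun x ↦ |r.eval x|) '' K)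

def extremalSet (K : Set ℝ) (r : ℝ[X]) : Set ℝ :=
  {x ∈ K | |r.eval x| = supNormOn K r}

section supNormOn

variable {K : Set ℝ} {r : ℝ[X]}

theorem abs_eval_le_supNormOn (hK : IsCompact K) {x : ℝ} (hx : x ∈ K) :
    |r.eval x| ≤ supNormOn K r :=
  le_csSup (hK.bddAbove_image (by fun_prop)) (Set.mem_image_of_mem _ hx)

theorem supNormOn_le (hK : K.Nonempty) {c : ℝ} (h : ∀ x ∈ K, |r.eval x| ≤ c) :
    supNormOn K r ≤ c :=
  csSup_le (hK.image _) (Set.forall_mem_image.2 h)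

theorem supNormOn_lt (hK : IsCompact K) (hK' : K.Nonempty) {c : ℝ}
    (h : ∀ x ∈ K, |r.eval x| < c) : supNormOn K r < c :=
  (hK.sSup_lt_iff_of_continuous hK' (by fun_prop) c).2 h

end supNormOn

theorem lt_card_of_extremalSet_subset {K : Set ℝ} (hK : IsCompact K) (hKi : K.Infinite)
    (hK0 : 0 ∉ K) {d : ℕ} {f : ℝ[X]} (hf : f.natDegree ≤ d) (hf0 : f.eval 0 = 1)
    (hmin : ∀ r : ℝ[X], r.natDegree ≤ d → r.eval 0 = 1 → supNormOn K f ≤ supNormOn K r)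
    {s : Finset ℝ} (hs : extremalSet K f ⊆ s) : d < s.card := by
  classical
  by_contra! hsd
  set M := supNormOn K f
  have hfM : ∀ x ∈ K, |f.eval x| ≤ M := fun x hx ↦ abs_eval_le_supNormOn hK hx
  obtain ⟨x₁, hx₁K, hx₁⟩ := (hKi.sdiff s.finite_toSet).nonempty
  have hM : 0 < M :=
    (abs_nonneg _).trans_lt ((hfM x₁ hx₁K).lt_of_ne fun h ↦ hx₁ (hs ⟨hx₁K, h⟩))
  set t := s.filter (· ∈ K)
  obtain ⟨h, hhd, hh0, hhf⟩ := exists_natDegree_le_card_eval_zero_eq_zero t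
    (by simp [t, hK0]) f.eval
  obtain ⟨ε, hε⟩ := exists_abs_lt_of_abs_eq_imp_eq_zero hK f.continuous (f - h).continuous hM
    hfM fun x hx hxM ↦ by simp [hhf x (Finset.mem_filter.2 ⟨hs ⟨hx, hxM⟩, hx⟩)]
  have hr : ∀ x, (f - C ε * h).eval x = (1 - ε) * f.eval x + ε * (f - h).eval x := by
    intro x; simp only [eval_sub, eval_mul, eval_C]; ring
  refine (hmin (f - C ε * h) ?_ ?_).not_gt (supNormOn_lt hK ⟨x₁, hx₁K⟩ fun x hx ↦ ?_)
  · exact (natDegree_sub_le _ _).trans (max_le hf ((natDegree_C_mul_le _ _).trans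
      (hhd.trans ((Finset.card_filter_le _ _).trans hsd))))
  · simp [hf0, hh0]
  · exact (hr x).symm ▸ hε x hx

theorem eq_of_forall_supNormOn_le {K : Set ℝ} (hK : IsCompact K) (hKi : K.Infinite)
    (hK0 : 0 ∉ K) {d : ℕ} {p q : ℝ[X]} (hp : p.natDegree ≤ d) (hq : q.natDegree ≤ d)
    (hp0 : p.eval 0 = 1) (hq0 : q.eval 0 = 1)
    (hpmin : ∀ r : ℝ[X], r.natDegree ≤ d → r.eval 0 = 1 → supNormOn K p ≤ supNormOn K r)
    (hqmin : ∀ r : ℝ[X], r.natDegree ≤ d → r.eval 0 = 1 → supNormOn K q ≤ supNormOn K r) :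
    p = q := by
  set M := supNormOn K p
  have hqM : supNormOn K q = M := le_antisymm (hqmin p hp hp0) (hpmin q hq hq0)
  set f := C 2⁻¹ * (p + q)
  have hf : ∀ x, f.eval x = (p.eval x + q.eval x) / 2 := fun x ↦ by
    simp only [f, eval_mul, eval_C, eval_add]; ring
  have hfd : f.natDegree ≤ d := (natDegree_C_mul_le _ _).trans
    ((natDegree_add_le _ _).trans (max_le hp hq))
  have hf0 : f.eval 0 = 1 := by rw [hf, hp0, hq0]; norm_num
  have hpM : ∀ x ∈ K, |p.eval x| ≤ M := fun x hx ↦ abs_eval_le_supNormOn hK hx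
  have hqM' : ∀ x ∈ K, |q.eval x| ≤ M := fun x hx ↦ hqM ▸ abs_eval_le_supNormOn hK hx
  have hfM : supNormOn K f = M := by
    refine le_antisymm (supNormOn_le hKi.nonempty fun x hx ↦ ?_) (hpmin f hfd hf0)
    rw [hf, abs_div, abs_two]
    linarith [abs_add_le (p.eval x) (q.eval x), hpM x hx, hqM' x hx]
  by_contra hpq
  have hpq0 : p - q ≠ 0 := sub_ne_zero.2 hpq
  have hext : extremalSet K f ⊆ (p - q).roots.toFinset := by
    rintro x ⟨hx, hxM⟩
    rw [hfM, hf] at hxM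
    simp [hpq0, eq_of_abs_le_of_abs_add_div_two_eq (hpM x hx) (hqM' x hx) hxM]
  have hcard : (p - q).roots.toFinset.card ≤ d :=
    (Multiset.toFinset_card_le _).trans ((card_roots' _).trans
      ((natDegree_sub_le _ _).trans (max_le hp hq)))
  exact (lt_card_of_extremalSet_subset hK hKi hK0 hfd hf0 (hfM ▸ hpmin) hext).not_ge hcard

end Polynomial

/-- Uniqueness of the minimizer of the sup norm on `[1,n]` over polynomials of
degree at most `d` with `p(0) = 1`. -/
theorem stmt9 (n : ℝ) (hn : 1 < n) (d : ℕ) (p q : Polynomial ℝ)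
    (hp : p.natDegree ≤ d) (hq : q.natDegree ≤ d)
    (hp0 : p.eval 0 = 1) (hq0 : q.eval 0 = 1)
    (hpmin : ∀ r : Polynomial ℝ, r.natDegree ≤ d → r.eval 0 = 1 →
      sSup ((fun x => |p.eval x|) '' Set.Icc 1 n)
        ≤ sSup ((fun x => |r.eval x|) '' Set.Icc 1 n))
    (hqmin : ∀ r : Polynomial ℝ, r.natDegree ≤ d → r.eval 0 = 1 →
      sSup ((fun x => |q.eval x|) '' Set.Icc 1 n)
        ≤ sSup ((fun x => |r.eval x|) '' Set.Icc 1 n)) :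
    p = q :=
  eq_of_forall_supNormOn_le isCompact_Icc (Set.Icc_infinite hn) (by simp) hp hq hp0 hq0
    hpmin hqmin
end

section
/- Let n > 1 and q = (√n + 1)/(√n − 1). Then the minimum over polynomials p of degree at most d with p(0) = 1 of max_{x∈[1,n]} |p(x)| equals 2/(q^d + q^{−d}). -/
open Polynomial Polynomial.Chebyshev Real Set

lemma natDegree_T_le (d : ℕ) : (T ℝ (d : ℤ)).natDegree ≤ d := by
  induction d using Nat.strong_induction_on with
  | _ d ih =>
    match d with
    | 0 => simp [T_zero]
    | 1 => simp [T_one]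
    | (k+2) =>
      have h1 := ih (k+1) (by omega)
      have h2 := ih k (by omega)
      have := T_add_two ℝ (k : ℤ)
      rw [show ((k:ℤ)+2) = ((k+2:ℕ):ℤ) by push_cast; ring] at this
      rw [this]
      refine (natDegree_sub_le _ _).trans ?_
      have : (2 * X * T ℝ (k+1 : ℕ)).natDegree ≤ k + 2 := by
        refine (natDegree_mul_le).trans ?_
        have : (2 * X : ℝ[X]).natDegree ≤ 1 := by
          refine (natDegree_mul_le).trans ?_
          simp
        push_cast at h1 ⊢
        omega
      push_cast at this h2 ⊢
      omega

lemma T_eval_add_inv (y : ℝ) (hy : 0 < y) (d : ℕ) :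
    (T ℝ (d : ℤ)).eval ((y + y⁻¹)/2) = (y^d + (y^d)⁻¹)/2 := by
  induction d using Nat.strong_induction_on with
  | _ d ih =>
    match d with
    | 0 => simp [T_zero]
    | 1 => simp [T_one]
    | (k+2) =>
      have h1 := ih (k+1) (by omega)
      have h2 := ih k (by omega)
      have := T_add_two ℝ (k : ℤ)
      rw [show ((k:ℤ)+2) = ((k+2:ℕ):ℤ) by push_cast; ring] at this
      rw [this]
      rw [show ((k:ℤ)+1) = ((k+1:ℕ):ℤ) by push_cast; ring]
      simp only [eval_sub, eval_mul, eval_ofNat, eval_X, h1, h2]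
      have hyk : y ^ k ≠ 0 := by positivity
      field_simp
      ring

set_option maxHeartbeats 2000000 in
/-- The Chebyshev minimax value: for `n > 1` and `q = (√n+1)/(√n−1)`, the
minimum of `max_{x ∈ [1,n]} |p(x)|` over polynomials `p` of degree at most `d`
with `p(0) = 1` equals `2/(q^d + q^{−d})`. -/
theorem stmt10 (n : ℝ) (hn : 1 < n) (d : ℕ) :
    IsLeast {E : ℝ | ∃ p : Polynomial ℝ, p.natDegree ≤ d ∧ p.eval 0 = 1 ∧
        E = sSup ((fun x => |p.eval x|) '' Set.Icc 1 n)}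
      (2 / (((Real.sqrt n + 1) / (Real.sqrt n - 1)) ^ d
        + (((Real.sqrt n + 1) / (Real.sqrt n - 1)) ^ d)⁻¹)) := by
  have hn1 : (0:ℝ) < n - 1 := by linarith
  set s : ℝ := Real.sqrt n with hs_def
  have hs : 1 < s := by
    rw [hs_def, show (1:ℝ) = Real.sqrt 1 by simp]
    exact Real.sqrt_lt_sqrt (by norm_num) hn
  have hs2 : s ^ 2 = n := Real.sq_sqrt (by linarith)
  set q : ℝ := (s + 1) / (s - 1) with hq_def
  have hq : 1 < q := by
    rw [hq_def, lt_div_iff₀ (by linarith)]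
    linarith
  have hqd : 1 ≤ q ^ d := one_le_pow₀ hq.le
  set K : ℝ := (q ^ d + (q ^ d)⁻¹) / 2 with hK_def
  have hK : 0 < K := by
    have : 0 < (q ^ d)⁻¹ := by positivity
    rw [hK_def]; linarith
  have hMK : 2 / (q ^ d + (q ^ d)⁻¹) = K⁻¹ := by
    rw [hK_def, inv_div]
  -- the key evaluation point
  have hkey : (n + 1) / (n - 1) = (q + q⁻¹) / 2 := by
    rw [hq_def]
    have h1 : s - 1 ≠ 0 := by linarith
    have h2 : s + 1 ≠ 0 := by linarith
    field_simp
    nlinarith [hs2]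
  have hTK : (T ℝ (d:ℤ)).eval ((n + 1) / (n - 1)) = K := by
    rw [hkey, T_eval_add_inv q (by linarith)]
  -- the affine map
  set mp : ℝ[X] := Polynomial.C ((n+1)/(n-1)) - Polynomial.C (2/(n-1)) * X with hmp_def
  have hmpe : ∀ x : ℝ, mp.eval x = (n+1)/(n-1) - (2/(n-1)) * x := by
    intro x; simp [hmp_def]
  have hmp0 : mp.eval 0 = (n+1)/(n-1) := by rw [hmpe]; ring
  have hmp1 : mp.eval 1 = 1 := by
    rw [hmpe]; field_simp; ring
  have hmpdeg : mp.natDegree ≤ 1 := by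
    refine (natDegree_sub_le _ _).trans ?_
    have h1 : (Polynomial.C (2/(n-1)) * X : ℝ[X]).natDegree ≤ 1 :=
      natDegree_mul_le.trans (by simp)
    simp only [natDegree_C]
    omega
  have hmprange : ∀ x ∈ Set.Icc (1:ℝ) n, mp.eval x ∈ Set.Icc (-1:ℝ) 1 := by
    intro x hx
    have hform : (n+1)/(n-1) - 2/(n-1)*x = (n+1-2*x)/(n-1) := by
      field_simp
    rw [hmpe, hform]
    constructor
    · rw [le_div_iff₀ hn1]; nlinarith [hx.2]
    · rw [div_le_iff₀ hn1]; nlinarith [hx.1]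
  have hTbound : ∀ z ∈ Set.Icc (-1:ℝ) 1, |(T ℝ (d:ℤ)).eval z| ≤ 1 := by
    intro z hz
    have hc : Real.cos (Real.arccos z) = z := Real.cos_arccos hz.1 hz.2
    rw [← hc, T_real_cos]
    exact Real.abs_cos_le_one _
  have hT1 : (T ℝ (d:ℤ)).eval 1 = 1 := by
    have := T_real_cos 0 (d:ℤ)
    simpa using this
  -- the extremal polynomial
  set p₀ : ℝ[X] := Polynomial.C K⁻¹ * ((T ℝ (d:ℤ)).comp mp) with hp₀_def
  have hp₀e : ∀ x : ℝ, p₀.eval x = K⁻¹ * (T ℝ (d:ℤ)).eval (mp.eval x) := by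
    intro x; simp [hp₀_def]
  have hp₀deg : p₀.natDegree ≤ d := by
    rw [hp₀_def]
    refine natDegree_mul_le.trans ?_
    have := natDegree_comp_le (p := T ℝ (d:ℤ)) (q := mp)
    have h2 := natDegree_T_le d
    simp only [natDegree_C, zero_add]
    calc ((T ℝ (d:ℤ)).comp mp).natDegree ≤ (T ℝ (d:ℤ)).natDegree * mp.natDegree :=
          natDegree_comp_le
      _ ≤ d * 1 := Nat.mul_le_mul h2 hmpdeg
      _ = d := by omega
  have hp₀0 : p₀.eval 0 = 1 := by
    rw [hp₀e, hmp0, hTK, inv_mul_cancel₀ hK.ne']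
  have hgreat : IsGreatest ((fun x => |p₀.eval x|) '' Set.Icc 1 n) K⁻¹ := by
    constructor
    · refine ⟨1, ⟨le_refl _, hn.le⟩, ?_⟩
      show |p₀.eval 1| = K⁻¹
      rw [hp₀e, hmp1, hT1, mul_one, abs_of_pos (by positivity)]
    · rintro _ ⟨x, hx, rfl⟩
      show |p₀.eval x| ≤ K⁻¹
      rw [hp₀e, abs_mul, abs_of_pos (show (0:ℝ) < K⁻¹ by positivity)]
      nth_rewrite 2 [show K⁻¹ = K⁻¹ * 1 by ring]
      exact mul_le_mul_of_nonneg_left (hTbound _ (hmprange x hx)) (by positivity)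
  rw [hMK]
  constructor
  · exact ⟨p₀, hp₀deg, hp₀0, hgreat.csSup_eq.symm⟩
  · rintro E ⟨p, hdeg, hp0, hE⟩
    by_contra hcon
    push_neg at hcon
    -- every value is ≤ E
    have hpb : ∀ x ∈ Set.Icc (1:ℝ) n, |p.eval x| ≤ E := by
      intro x hx
      have hcont : Continuous fun x : ℝ => |p.eval x| := p.continuous.abs
      have hbdd : BddAbove ((fun x => |p.eval x|) '' Set.Icc 1 n) :=
        (isCompact_Icc.image hcont).bddAbove
      rw [hE]
      exact le_csSup hbdd ⟨x, hx, rfl⟩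
    set r : ℝ[X] := (T ℝ (d:ℤ)).comp mp - Polynomial.C K * p with hr_def
    have hre : ∀ x : ℝ, r.eval x = (T ℝ (d:ℤ)).eval (mp.eval x) - K * p.eval x := by
      intro x; simp [hr_def]
    have hrdeg : r.natDegree ≤ d := by
      refine (natDegree_sub_le _ _).trans ?_
      have h1 : ((T ℝ (d:ℤ)).comp mp).natDegree ≤ d :=
        natDegree_comp_le.trans (by
          calc (T ℝ (d:ℤ)).natDegree * mp.natDegree ≤ d * 1 :=
                Nat.mul_le_mul (natDegree_T_le d) hmpdeg
            _ = d := by omega)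
      have h2 : (Polynomial.C K * p).natDegree ≤ d :=
        natDegree_mul_le.trans (by simp; omega)
      omega
    have hr0 : r.eval 0 = 0 := by
      rw [hre, hmp0, hTK, hp0, mul_one, sub_self]
    -- the extremal points
    set pt : ℕ → ℝ := fun k => ((n+1) - (n-1) * Real.cos (k * π / d)) / 2 with hpt_def
    have hpt_mp : ∀ k : ℕ, mp.eval (pt k) = Real.cos (k * π / d) := by
      intro k
      rw [hmpe, hpt_def]
      field_simp
      ring
    have hpt_mem : ∀ k : ℕ, pt k ∈ Set.Icc (1:ℝ) n := by
      intro k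
      have h1 := Real.cos_le_one (k * π / d)
      have h2 := Real.neg_one_le_cos (k * π / d)
      constructor
      · rw [hpt_def]; dsimp only; nlinarith
      · rw [hpt_def]; dsimp only; nlinarith
    have hpt_mono : ∀ a b : ℕ, a < b → b ≤ d → pt a < pt b := by
      intro a b hab hbd
      have hd0 : (0:ℝ) < d := by
        have : 0 < d := by omega
        exact_mod_cast this
      have hmem : ∀ c : ℕ, c ≤ d → (c * π / d : ℝ) ∈ Set.Icc 0 π := by
        intro c hc
        constructor
        · positivity
        · rw [div_le_iff₀ hd0]
          have : (c:ℝ) ≤ d := by exact_mod_cast hc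
          nlinarith [Real.pi_pos]
      have hlt : (a * π / d : ℝ) < b * π / d := by
        rw [div_lt_div_iff₀ hd0 hd0]
        have hab' : (a:ℝ) < b := by exact_mod_cast hab
        have hprd := mul_pos (mul_pos (sub_pos.mpr hab') Real.pi_pos) hd0
        nlinarith
      have := Real.strictAntiOn_cos (hmem a (by omega)) (hmem b hbd) hlt
      rw [hpt_def]
      dsimp only
      nlinarith
    -- sign alternation
    have hEK : E < K⁻¹ := hcon
    have hsign : ∀ k : ℕ, k ≤ d → d ≠ 0 → (0:ℝ) < (-1)^k * r.eval (pt k) := by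
      intro k hk hd
      have hd0 : (d:ℝ) ≠ 0 := by exact_mod_cast hd
      have hTpt : (T ℝ (d:ℤ)).eval (mp.eval (pt k)) = (-1)^k := by
        rw [hpt_mp, T_real_cos]
        have harg : ((d:ℤ):ℝ) * (k * π / d) = k * π := by
          push_cast
          field_simp
        rw [harg]
        have := Real.cos_nat_mul_pi_sub 0 k
        simpa using this
      have hple : |p.eval (pt k)| ≤ E := hpb _ (hpt_mem k)
      have habs : |K * p.eval (pt k)| < 1 := by
        rw [abs_mul, abs_of_pos hK]
        calc K * |p.eval (pt k)| ≤ K * E := by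
              exact mul_le_mul_of_nonneg_left hple hK.le
          _ < K * K⁻¹ := by exact (mul_lt_mul_iff_right₀ hK).mpr hEK
          _ = 1 := mul_inv_cancel₀ hK.ne'
      rw [hre, hTpt]
      have h1 : ((-1:ℝ)^k) * ((-1:ℝ)^k) = 1 := by
        rw [← pow_add]
        exact Even.neg_one_pow ⟨k, rfl⟩
      have h2 : |(-1:ℝ)^k * (K * p.eval (pt k))| = |K * p.eval (pt k)| := by
        rw [abs_mul]
        simp
      have h3 : (-1:ℝ)^k * (K * p.eval (pt k)) < 1 := by
        calc (-1:ℝ)^k * (K * p.eval (pt k)) ≤ |(-1:ℝ)^k * (K * p.eval (pt k))| := le_abs_self _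
          _ = |K * p.eval (pt k)| := h2
          _ < 1 := habs
      nlinarith
    -- roots between consecutive extremal points
    have hroot : ∀ k : ℕ, k < d → ∃ y ∈ Set.Ioo (pt k) (pt (k+1)), r.eval y = 0 := by
      intro k hk
      have hd : d ≠ 0 := by omega
      have s1 := hsign k (by omega) hd
      have s2 := hsign (k+1) (by omega) hd
      have hlt : pt k < pt (k+1) := hpt_mono k (k+1) (by omega) (by omega)
      have hprod : r.eval (pt k) * r.eval (pt (k+1)) < 0 := by
        have h1 : ((-1:ℝ)^k) * ((-1:ℝ)^k) = 1 := by
          rw [← pow_add]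
          exact Even.neg_one_pow ⟨k, rfl⟩
        have : (-1:ℝ)^(k+1) = -(-1:ℝ)^k := by rw [pow_succ]; ring
        rw [this] at s2
        nlinarith
      have hcont : ContinuousOn (fun t : ℝ => r.eval t) (Set.Icc (pt k) (pt (k+1))) :=
        r.continuous.continuousOn
      rcases lt_or_ge (r.eval (pt k)) 0 with hneg | hpos
      · have hb : 0 < r.eval (pt (k+1)) := by
          by_contra h
          push_neg at h
          nlinarith
        have := intermediate_value_Ioo hlt.le hcont (Set.mem_Ioo.mpr ⟨hneg, hb⟩)
        obtain ⟨y, hy1, hy2⟩ := this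
        exact ⟨y, hy1, hy2⟩
      · have ha : 0 < r.eval (pt k) := by
          rcases hpos.lt_or_eq with h | h
          · exact h
          · rw [← h, mul_zero] at s1
            exact absurd s1 (lt_irrefl 0)
        have hb : r.eval (pt (k+1)) < 0 := by
          by_contra h
          push_neg at h
          nlinarith
        have := intermediate_value_Ioo' hlt.le hcont (Set.mem_Ioo.mpr ⟨hb, ha⟩)
        obtain ⟨y, hy1, hy2⟩ := this
        exact ⟨y, hy1, hy2⟩
    choose y hymem hyzero using fun k : Fin d => hroot k k.2
    -- the roots are distinct and nonzero
    have hylt : ∀ i j : Fin d, i < j → y i < y j := by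
      intro i j hij
      have h1 : y i < pt (i+1) := (hymem i).2
      have h2 : pt j < y j := (hymem j).1
      have h3 : pt ((i:ℕ)+1) ≤ pt j := by
        rcases Nat.lt_or_ge ((i:ℕ)+1) j with h | h
        · exact (hpt_mono _ _ h (by omega)).le
        · have : ((i:ℕ)+1) = (j:ℕ) := by
            have := Fin.lt_iff_val_lt_val.mp hij
            omega
          rw [this]
      linarith
    have hyinj : Function.Injective y := by
      intro i j hij
      by_contra hne
      rcases lt_or_gt_of_ne hne with h | h
      · exact absurd hij (hylt i j h).ne
      · exact absurd hij.symm (hylt j i h).ne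
    have hypos : ∀ i : Fin d, 0 < y i := by
      intro i
      have := (hymem i).1
      have := (hpt_mem i).1
      linarith
    -- r has d+1 roots, so r = 0
    have hrzero : r = 0 := by
      classical
      apply Polynomial.eq_zero_of_natDegree_lt_card_of_eval_eq_zero' r
        (insert (0:ℝ) (Finset.image y Finset.univ))
      · intro i hi
        rcases Finset.mem_insert.mp hi with h | h
        · rw [h]; exact hr0
        · obtain ⟨k, _, rfl⟩ := Finset.mem_image.mp h
          exact hyzero k
      · rw [Finset.card_insert_of_notMem, Finset.card_image_of_injective _ hyinj]
        · simp; omega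
        · intro hmem
          obtain ⟨k, _, hk⟩ := Finset.mem_image.mp hmem
          exact absurd hk.symm (hypos k).ne
    -- contradiction: then |p(1)| = K⁻¹ > E
    have h1 : r.eval 1 = 0 := by rw [hrzero]; simp
    rw [hre, hmp1, hT1] at h1
    have hp1 : p.eval 1 = K⁻¹ := by
      field_simp at h1 ⊢
      linarith
    have := hpb 1 ⟨le_refl _, hn.le⟩
    rw [hp1, abs_of_pos (by positivity)] at this
    linarith
end

section
/- Let d ≥ 1 and n ≥ 2, and let x̂_k = ((n−1)cos(kπ/d) + (n+1))/2 for 0 ≤ k ≤ d be the extrema of the Chebyshev polynomial of degree d mapped affinely from [−1,1] to [1,n]. Then all of x̂_0, ..., x̂_d are integers if and only if one of the following holds: d = 1; or d = 2 and n is odd; or d = 3 and n ≡ 1 (mod 4). -/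
open Polynomial in
private lemma dickson11_natDegree_le : ∀ m : ℕ, (dickson 1 (1:ℤ) m).natDegree ≤ m
  | 0 => by
      rw [Polynomial.dickson_zero]
      norm_num
  | 1 => by simp
  | (m+2) => by
    have h1 := dickson11_natDegree_le (m+1)
    have h0 := dickson11_natDegree_le m
    rw [dickson_add_two]
    refine le_trans (natDegree_sub_le _ _) (max_le ?_ ?_)
    · exact le_trans (natDegree_mul_le) (by simpa using by omega)
    · exact le_trans (natDegree_mul_le) (by simp; omega)

open Polynomial in
private lemma dickson11_monic : ∀ m : ℕ,
    (dickson 1 (1:ℤ) (m+1)).Monic ∧ (dickson 1 (1:ℤ) (m+1)).natDegree = m+1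
  | 0 => ⟨monic_X, natDegree_X⟩
  | (m+1) => by
    have ih := dickson11_monic m
    have h0 := dickson11_natDegree_le m
    have hmon : (X * dickson 1 (1:ℤ) (m+1)).Monic := monic_X.mul ih.1
    have hnd : (X * dickson 1 (1:ℤ) (m+1)).natDegree = m + 2 := by
      rw [natDegree_mul X_ne_zero ih.1.ne_zero, natDegree_X, ih.2]; omega
    have hdeg : (C (1:ℤ) * dickson 1 (1:ℤ) m).degree < (X * dickson 1 (1:ℤ) (m+1)).degree := by
      rw [degree_eq_natDegree hmon.ne_zero, hnd]
      calc (C (1:ℤ) * dickson 1 (1:ℤ) m).degree ≤ (dickson 1 (1:ℤ) m).degree := by simp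
        _ ≤ ((dickson 1 (1:ℤ) m).natDegree : WithBot ℕ) := degree_le_natDegree
        _ < ((m + 2 : ℕ) : WithBot ℕ) := by exact_mod_cast by omega
    constructor
    · rw [show m + 1 + 1 = m + 2 from rfl, dickson_add_two]
      exact hmon.sub_of_left hdeg
    · rw [show m + 1 + 1 = m + 2 from rfl, dickson_add_two]
      have hdeq : (X * dickson 1 (1:ℤ) (m+1) - C 1 * dickson 1 (1:ℤ) m).degree
          = (X * dickson 1 (1:ℤ) (m+1)).degree := degree_sub_eq_left_of_degree_lt hdeg
      rw [natDegree_eq_natDegree hdeq, hnd]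

open Polynomial in
/-- If `cos (π/d)` is rational (for `d ≥ 1`), then `2 cos (π/d)` is an integer. -/
private lemma two_cos_pi_div_int (d : ℕ) (hd : 1 ≤ d) (r : ℚ)
    (hr : (r : ℝ) = Real.cos (Real.pi / d)) : ∃ t : ℤ, (t : ℝ) = 2 * Real.cos (Real.pi / d) := by
  set P : ℤ[X] := dickson 1 1 d + C 2 with hP
  obtain ⟨m, rfl⟩ : ∃ m, d = m + 1 := ⟨d - 1, by omega⟩
  have hmon : P.Monic := by
    refine (dickson11_monic m).1.add_of_left ?_
    rw [degree_eq_natDegree (dickson11_monic m).1.ne_zero, (dickson11_monic m).2]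
    exact lt_of_le_of_lt (degree_C_le) (by exact_mod_cast WithBot.coe_lt_coe.mpr (by omega))
  -- evaluate over ℂ
  set θ : ℝ := Real.pi / (m+1) with hθ
  have hr' : (r : ℝ) = Real.cos θ := by
    rw [hθ, hr]; norm_num
  have hC : (aeval (2 * Complex.cos θ) P : ℂ) = 0 := by
    have hxy : Complex.exp (θ * Complex.I) * Complex.exp (-θ * Complex.I) = 1 := by
      rw [← Complex.exp_add]; ring_nf; exact Complex.exp_zero
    have h2c : (2 : ℂ) * Complex.cos θ
        = Complex.exp (θ * Complex.I) + Complex.exp (-θ * Complex.I) := Complex.two_cos θ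
    have heval : aeval (2 * Complex.cos θ) (dickson 1 (1:ℤ) (m+1))
        = Complex.exp (θ*Complex.I) ^ (m+1) + Complex.exp (-θ*Complex.I) ^ (m+1) := by
      rw [aeval_def, ← eval_map, map_dickson]
      rw [show ((algebraMap ℤ ℂ) 1 : ℂ) = 1 from map_one _, h2c]
      exact dickson_one_one_eval_add_inv _ _ hxy _
    have hpow : Complex.exp (θ*Complex.I) ^ (m+1) = -1 := by
      rw [← Complex.exp_nat_mul]
      have : ((m+1 : ℕ) : ℂ) * (θ * Complex.I) = Real.pi * Complex.I := by
        rw [hθ]; push_cast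
        have hne : ((m:ℂ) + 1) ≠ 0 := Nat.cast_add_one_ne_zero m
        field_simp
      rw [this, Complex.exp_pi_mul_I]
    have hpow' : Complex.exp (-θ*Complex.I) ^ (m+1) = -1 := by
      rw [← Complex.exp_nat_mul]
      have : ((m+1 : ℕ) : ℂ) * (-θ * Complex.I) = -(Real.pi * Complex.I) := by
        rw [hθ]; push_cast
        have hne : ((m:ℂ) + 1) ≠ 0 := Nat.cast_add_one_ne_zero m
        field_simp
      rw [this, Complex.exp_neg, Complex.exp_pi_mul_I]; norm_num
    rw [hP, map_add, heval, hpow, hpow', aeval_C]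
    norm_num
  -- transfer to ℚ
  have hq : (aeval (2 * r : ℚ) P : ℚ) = 0 := by
    have key := aeval_algebraMap_apply ℂ (2 * r : ℚ) P
    have hmap : algebraMap ℚ ℂ (2 * r) = 2 * Complex.cos θ := by
      rw [eq_ratCast (algebraMap ℚ ℂ) (2 * r)]
      push_cast
      rw [show ((r:ℚ):ℂ) = Complex.cos θ by
        rw [← Complex.ofReal_ratCast, hr', Complex.ofReal_cos]]
    rw [hmap, hC] at key
    exact (algebraMap ℚ ℂ).injective (by rw [map_zero]; exact key.symm)
  have hint : IsIntegral ℤ (2 * r : ℚ) := ⟨P, hmon, by rwa [aeval_def] at hq⟩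
  obtain ⟨t, ht⟩ := IsIntegrallyClosed.isIntegral_iff.mp hint
  refine ⟨t, ?_⟩
  have h1 : (t : ℚ) = 2 * r := by rw [← ht]; simp [eq_intCast]
  have h2 : (t : ℝ) = 2 * (r : ℝ) := by exact_mod_cast congrArg (fun x : ℚ => (x : ℝ)) h1
  rw [h2, hr]

/-- Integrality of the mapped Chebyshev extrema
`x̂_k = ((n−1)·cos(kπ/d) + (n+1))/2`, `0 ≤ k ≤ d`: all `x̂_k` are integers iff
`d = 1`, or `d = 2` with `n` odd, or `d = 3` with `n ≡ 1 (mod 4)`. -/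
theorem stmt17 (d n : ℕ) (hd : 1 ≤ d) (hn : 2 ≤ n) :
    (∀ k : ℕ, k ≤ d → ∃ m : ℤ,
        (((n : ℝ) - 1) * Real.cos (k * Real.pi / d) + ((n : ℝ) + 1)) / 2 = m)
      ↔ (d = 1 ∨ (d = 2 ∧ Odd n) ∨ (d = 3 ∧ n % 4 = 1)) := by
  have hn1 : ((n : ℝ) - 1) ≠ 0 := by
    have : (2:ℝ) ≤ n := by exact_mod_cast hn
    linarith
  constructor
  · intro h
    -- first: d ≤ 3
    have hd3 : d ≤ 3 := by
      by_contra hgt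
      push_neg at hgt
      have hd4 : 4 ≤ d := by omega
      obtain ⟨m, hm⟩ := h 1 (by omega)
      have h1 : ((1:ℕ):ℝ) * Real.pi / d = Real.pi / d := by push_cast; ring
      rw [h1] at hm
      set r : ℚ := (2*m - n - 1) / (n - 1) with hrdef
      have hr : (r : ℝ) = Real.cos (Real.pi / d) := by
        have hne : ((n:ℚ) - 1) ≠ 0 := by
          have : (2:ℚ) ≤ n := by exact_mod_cast hn
          linarith
        rw [hrdef]
        push_cast
        field_simp
        field_simp at hm
        linarith
      obtain ⟨t, ht⟩ := two_cos_pi_div_int d hd r hr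
      have hdpos : (0:ℝ) < d := by positivity
      have hcos_lt : Real.cos (Real.pi / d) < 1 := by
        have h1d : (1:ℝ) ≤ d := by exact_mod_cast hd
        have hy : Real.pi / d ≤ Real.pi := div_le_self Real.pi_pos.le h1d
        have := Real.cos_lt_cos_of_nonneg_of_le_pi (le_refl (0:ℝ)) hy (by positivity)
        simpa using this
      have hcos_ge : Real.sqrt 2 / 2 ≤ Real.cos (Real.pi / d) := by
        rw [← Real.cos_pi_div_four]
        apply Real.cos_le_cos_of_nonneg_of_le_pi (by positivity)
          (by linarith [Real.pi_pos])
        rw [div_le_div_iff₀ hdpos (by norm_num)]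
        have : (4:ℝ) ≤ d := by exact_mod_cast hd4
        nlinarith [Real.pi_pos]
      have hs2 : (1:ℝ) < Real.sqrt 2 := by
        nlinarith [Real.sq_sqrt (by norm_num : (0:ℝ) ≤ 2), Real.sqrt_nonneg 2]
      have ht1 : (1:ℝ) < t := by rw [ht]; nlinarith
      have ht2 : (t:ℝ) < 2 := by rw [ht]; nlinarith
      have : (1:ℤ) < t := by exact_mod_cast ht1
      have : t < 2 := by exact_mod_cast ht2
      omega
    interval_cases d
    · left; rfl
    · right; left
      refine ⟨rfl, ?_⟩
      obtain ⟨m, hm⟩ := h 1 (by omega)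
      rw [show ((1:ℕ):ℝ) * Real.pi / ((2:ℕ):ℝ) = Real.pi / 2 by push_cast; ring,
        Real.cos_pi_div_two] at hm
      have : (n:ℝ) + 1 = 2 * m := by linarith
      have : (n:ℤ) + 1 = 2 * m := by exact_mod_cast this
      rw [Nat.odd_iff]; omega
    · right; right
      refine ⟨rfl, ?_⟩
      obtain ⟨m, hm⟩ := h 1 (by omega)
      rw [show ((1:ℕ):ℝ) * Real.pi / ((3:ℕ):ℝ) = Real.pi / 3 by push_cast; ring,
        Real.cos_pi_div_three] at hm
      have : 3 * (n:ℝ) + 1 = 4 * m := by linarith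
      have : 3 * (n:ℤ) + 1 = 4 * m := by exact_mod_cast this
      omega
  · rintro (rfl | ⟨rfl, hodd⟩ | ⟨rfl, h4⟩) <;> intro k hk
    · interval_cases k
      · exact ⟨n, by
          rw [show ((0:ℕ):ℝ) * Real.pi / ((1:ℕ):ℝ) = 0 by push_cast; ring, Real.cos_zero]
          push_cast; ring⟩
      · exact ⟨1, by
          rw [show ((1:ℕ):ℝ) * Real.pi / ((1:ℕ):ℝ) = Real.pi by push_cast; ring,
            Real.cos_pi]; push_cast; ring⟩
    · obtain ⟨a, rfl⟩ := hodd
      interval_cases k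
      · exact ⟨2*a+1, by
          rw [show ((0:ℕ):ℝ) * Real.pi / ((2:ℕ):ℝ) = 0 by push_cast; ring, Real.cos_zero]
          push_cast; ring⟩
      · exact ⟨a+1, by
          rw [show ((1:ℕ):ℝ) * Real.pi / ((2:ℕ):ℝ) = Real.pi / 2 by push_cast; ring,
            Real.cos_pi_div_two]; push_cast; ring⟩
      · exact ⟨1, by
          rw [show ((2:ℕ):ℝ) * Real.pi / ((2:ℕ):ℝ) = Real.pi by push_cast; ring,
            Real.cos_pi]; push_cast; ring⟩
    · obtain ⟨a, rfl⟩ : ∃ a, n = 4*a + 1 := ⟨n/4, by omega⟩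
      interval_cases k
      · exact ⟨4*a+1, by
          rw [show ((0:ℕ):ℝ) * Real.pi / ((3:ℕ):ℝ) = 0 by push_cast; ring, Real.cos_zero]
          push_cast; ring⟩
      · exact ⟨3*a+1, by
          rw [show ((1:ℕ):ℝ) * Real.pi / ((3:ℕ):ℝ) = Real.pi / 3 by push_cast; ring,
            Real.cos_pi_div_three]; push_cast; ring⟩
      · exact ⟨a+1, by
          rw [show ((2:ℕ):ℝ) * Real.pi / ((3:ℕ):ℝ) = Real.pi - Real.pi / 3 by push_cast; ring,
            Real.cos_pi_sub, Real.cos_pi_div_three]; push_cast; ring⟩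
      · exact ⟨1, by
          rw [show ((3:ℕ):ℝ) * Real.pi / ((3:ℕ):ℝ) = Real.pi by push_cast; ring,
            Real.cos_pi]; push_cast; ring⟩
end
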